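/- arXiv:2007.12338 — 3 statements merged into one kernel-verified Lean document; each statement's English description precedes it below -/
import Mathlib

section
/- Let 𝐅 = (F₁,…,Fₙ) be an n-tuple of Borel probability measures on ℝ and let Λ be an n×n doubly stochastic matrix. Then Dₙ(Λ𝐅) ⊆ Dₙ(F̄,…,F̄), where F̄ = (1/n)·(F₁ + ⋯ + Fₙ) is the equal-weight mixture of the components of 𝐅. -/
open MeasureTheory
open scoped ENNReal BigOperators

noncomputable section

/-- The `f`-aggregation set: laws of `f (X₁,…,Xₙ)` over all couplings with marginals `F`. -/
def aggSetF (n : ℕ) (f : (Fin n → ℝ) → ℝ) (F : Fin n → Measure ℝ) : Set (Measure ℝ) :=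
  {H | ∃ μ : Measure (Fin n → ℝ), IsProbabilityMeasure μ ∧
    (∀ i, μ.map (fun x => x i) = F i) ∧ H = μ.map f}

/-- The aggregation set for sums. -/
def aggSet (n : ℕ) (F : Fin n → Measure ℝ) : Set (Measure ℝ) :=
  aggSetF n (fun x => ∑ i, x i) F

/-- A symmetric function on `ℝⁿ`. -/
def IsSymmetricFn (n : ℕ) (f : (Fin n → ℝ) → ℝ) : Prop :=
  ∀ (π : Equiv.Perm (Fin n)) (x : Fin n → ℝ), f (x ∘ π) = f x

/-- Left-continuous quantile function of a measure on ℝ. -/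
def quantile (F : Measure ℝ) (p : ℝ) : ℝ :=
  sInf {x : ℝ | p ≤ (F (Set.Iic x)).toReal}

/-- The uniform probability measure on (0,1). -/
def uniform01 : Measure ℝ := volume.restrict (Set.Ioo (0 : ℝ) 1)

/-- Comonotonic sum F₁ ⊕ ⋯ ⊕ Fₙ : the law of ∑ Fᵢ⁻¹(U), U uniform on (0,1). -/
def comonoSum (n : ℕ) (F : Fin n → Measure ℝ) : Measure ℝ :=
  uniform01.map (fun u => ∑ i, quantile (F i) u)

/-- Convex order F ≺cx G. -/
def ConvexOrder (F G : Measure ℝ) : Prop :=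
  ∀ φ : ℝ → ℝ, ConvexOn ℝ Set.univ φ → Integrable φ F → Integrable φ G →
    ∫ x, φ x ∂F ≤ ∫ x, φ x ∂G

/-- Stochastic order F ≺st G, i.e. F((-∞,x]) ≥ G((-∞,x]) for all x. -/
def StOrder (F G : Measure ℝ) : Prop :=
  ∀ x : ℝ, G (Set.Iic x) ≤ F (Set.Iic x)

/-- Doubly stochastic matrix. -/
def DoublyStochastic {n : ℕ} (Λ : Matrix (Fin n) (Fin n) ℝ) : Prop :=
  (∀ i j, 0 ≤ Λ i j) ∧ (∀ i, ∑ j, Λ i j = 1) ∧ (∀ j, ∑ i, Λ i j = 1)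

/-- Distribution mixture Λ𝐅 : i-th component is ∑ⱼ Λᵢⱼ Fⱼ. -/
def distMix {n : ℕ} (Λ : Matrix (Fin n) (Fin n) ℝ) (F : Fin n → Measure ℝ) :
    Fin n → Measure ℝ :=
  fun i => ∑ j, ENNReal.ofReal (Λ i j) • F j

/-- Quantile mixture Λ⊗𝐅 : i-th component is the law of ∑ⱼ Λᵢⱼ Fⱼ⁻¹(U). -/
def quantileMix {n : ℕ} (Λ : Matrix (Fin n) (Fin n) ℝ) (F : Fin n → Measure ℝ) :
    Fin n → Measure ℝ :=
  fun i => uniform01.map (fun u => ∑ j, Λ i j * quantile (F j) u)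

/-- Worst-case value of a risk measure over the aggregation set, valued in EReal. -/
def worstCase (ρ : Measure ℝ → ℝ) (n : ℕ) (F : Fin n → Measure ℝ) : EReal :=
  sSup ((fun H => ((ρ H : ℝ) : EReal)) '' aggSet n F)

/-- Worst-case Value-at-Risk over the aggregation set, valued in EReal. -/
def worstVaR (p : ℝ) (n : ℕ) (F : Fin n → Measure ℝ) : EReal :=
  sSup ((fun G => ((quantile G p : ℝ) : EReal)) '' aggSet n F)

/-- The class M_D of distributions with a nonincreasing density on an interval support. -/
def MemMD (F : Measure ℝ) : Prop :=
  ∃ f : ℝ → ℝ, Measurable f ∧ (∀ x, 0 ≤ f x) ∧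
    F = volume.withDensity (fun x => ENNReal.ofReal (f x)) ∧
    ∃ s : Set ℝ, s.OrdConnected ∧ (∀ x, x ∉ s → f x = 0) ∧
      (∀ x ∈ s, ∀ y ∈ s, x ≤ y → f y ≤ f x)

/-- The class M_I of distributions with a nondecreasing density on an interval support. -/
def MemMI (F : Measure ℝ) : Prop :=
  ∃ f : ℝ → ℝ, Measurable f ∧ (∀ x, 0 ≤ f x) ∧
    F = volume.withDensity (fun x => ENNReal.ofReal (f x)) ∧
    ∃ s : Set ℝ, s.OrdConnected ∧ (∀ x, x ∉ s → f x = 0) ∧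
      (∀ x ∈ s, ∀ y ∈ s, x ≤ y → f x ≤ f y)

/-- Pareto(α, θ) distribution, via its Lebesgue density α θ^α x^{-(α+1)} on [θ, ∞). -/
def pareto (α θ : ℝ) : Measure ℝ :=
  volume.withDensity
    (fun x => if θ ≤ x then ENNReal.ofReal (α * θ ^ α / x ^ (α + 1)) else 0)

/-- A monotone risk measure (w.r.t. stochastic order, on probability measures). -/
def MonotoneRisk (ρ : Measure ℝ → ℝ) : Prop :=
  ∀ F G : Measure ℝ, IsProbabilityMeasure F → IsProbabilityMeasure G →
    StOrder F G → ρ F ≤ ρ G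

/-- A risk measure consistent with convex order (on finite-mean probability measures). -/
def CxConsistentRisk (ρ : Measure ℝ → ℝ) : Prop :=
  ∀ F G : Measure ℝ, IsProbabilityMeasure F → IsProbabilityMeasure G →
    Integrable id F → Integrable id G → ConvexOrder F G → ρ F ≤ ρ G

/-- Uniform distribution on [a,b]. -/
def unifOn (a b : ℝ) : Measure ℝ :=
  (ENNReal.ofReal (b - a))⁻¹ • volume.restrict (Set.Icc a b)

/-- Bernoulli distribution with parameter p, as a measure on ℝ. -/
def bern (p : ℝ) : Measure ℝ :=
  ENNReal.ofReal (1 - p) • Measure.dirac (0 : ℝ) + ENNReal.ofReal p • Measure.dirac (1 : ℝ)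

/-- The set C(𝐅) of finite-mean distributions dominated by the comonotonic sum in convex order. -/
def CSet (n : ℕ) (F : Fin n → Measure ℝ) : Set (Measure ℝ) :=
  {G | IsProbabilityMeasure G ∧ Integrable id G ∧ ConvexOrder G (comonoSum n F)}

/-!
If `X` has marginals `G₁, …, Gₙ` and `K` is uniform on `ℤ/nℤ` and independent of `X`, the rotated
vector `(X_{i+K})ᵢ` has every marginal equal to the average `n⁻¹ ∑ Gᵢ` and the same sum as `X`.
Applied to `G = Λ𝐅`, that average is `F̄` because every column of `Λ` sums to one.
-/

section CyclicAverage

variable {n : ℕ} [NeZero n] {α : Type*} [MeasurableSpace α]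

lemma measurable_comp_addRight (k : Fin n) :
    Measurable fun x : Fin n → α => x ∘ Equiv.addRight k :=
  measurable_pi_lambda _ fun i => measurable_pi_apply (i + k)

/-- The law of `(X_{i+K})ᵢ` for `X ~ μ` and `K` uniform on `Fin n`, independent of `X`. -/
def cyclicAverage (μ : Measure (Fin n → α)) : Measure (Fin n → α) :=
  (n : ℝ≥0∞)⁻¹ • ∑ k : Fin n, μ.map (· ∘ Equiv.addRight k)

lemma map_cyclicAverage_of_isSymmetricFn (μ : Measure (Fin n → ℝ))
    {f : (Fin n → ℝ) → ℝ} (hf : Measurable f) (hsym : IsSymmetricFn n f) :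
    (cyclicAverage μ).map f = μ.map f := by
  have hrot : ∀ k : Fin n, (μ.map (· ∘ Equiv.addRight k)).map f = μ.map f := fun k => by
    rw [Measure.map_map hf (measurable_comp_addRight k)]
    exact congrArg (μ.map ·) (funext fun x => hsym _ x)
  rw [cyclicAverage, Measure.map_smul, Measure.map_finset_sum hf.aemeasurable]
  simp only [hrot, Finset.sum_const, Finset.card_univ, Fintype.card_fin]
  rw [← Nat.cast_smul_eq_nsmul ℝ≥0∞, smul_smul,
    ENNReal.inv_mul_cancel (NeZero.ne _) (ENNReal.natCast_ne_top n), one_smul]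

variable (μ : Measure (Fin n → α))

lemma isProbabilityMeasure_cyclicAverage [IsProbabilityMeasure μ] :
    IsProbabilityMeasure (cyclicAverage μ) := by
  have : ∀ k : Fin n, IsProbabilityMeasure (μ.map (· ∘ Equiv.addRight k)) := fun k =>
    Measure.isProbabilityMeasure_map (measurable_comp_addRight k).aemeasurable
  constructor
  simp only [cyclicAverage, Measure.smul_apply, Measure.finsetSum_apply, measure_univ,
    Finset.sum_const, Finset.card_univ, Fintype.card_fin, nsmul_eq_mul, mul_one, smul_eq_mul]
  exact ENNReal.inv_mul_cancel (NeZero.ne _) (ENNReal.natCast_ne_top n)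

lemma map_eval_cyclicAverage (i : Fin n) :
    (cyclicAverage μ).map (fun x => x i) = (n : ℝ≥0∞)⁻¹ • ∑ j, μ.map (fun x => x j) := by
  have hi : Measurable fun x : Fin n → α => x i := measurable_pi_apply i
  rw [cyclicAverage, Measure.map_smul, Measure.map_finset_sum hi.aemeasurable]
  congr 1
  simp_rw [Measure.map_map hi (measurable_comp_addRight _)]
  exact Fintype.sum_equiv (Equiv.addLeft i) _ _ fun k => rfl

end CyclicAverage

theorem aggSetF_subset_aggSetF_average {n : ℕ} {f : (Fin n → ℝ) → ℝ} (hf : Measurable f)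
    (hsym : IsSymmetricFn n f) (G : Fin n → Measure ℝ) :
    aggSetF n f G ⊆ aggSetF n f (fun _ => (n : ℝ≥0∞)⁻¹ • ∑ i, G i) := by
  rintro H ⟨μ, hμ, hmarg, rfl⟩
  obtain rfl | hn := n.eq_zero_or_pos
  · exact ⟨μ, hμ, fun i => i.elim0, rfl⟩
  have : NeZero n := ⟨hn.ne'⟩
  refine ⟨cyclicAverage μ, isProbabilityMeasure_cyclicAverage μ, fun i => ?_,
    (map_cyclicAverage_of_isSymmetricFn μ hf hsym).symm⟩
  simp only [map_eval_cyclicAverage, hmarg]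

lemma isSymmetricFn_sum (n : ℕ) : IsSymmetricFn n fun x => ∑ i, x i :=
  fun π x => Equiv.sum_comp π x

lemma sum_distMix {n : ℕ} {Λ : Matrix (Fin n) (Fin n) ℝ} (hnonneg : ∀ i j, 0 ≤ Λ i j)
    (hcol : ∀ j, ∑ i, Λ i j = 1) (F : Fin n → Measure ℝ) :
    ∑ i, distMix Λ F i = ∑ j, F j := by
  simp only [distMix]
  rw [Finset.sum_comm]
  refine Finset.sum_congr rfl fun j _ => ?_
  rw [← Finset.sum_smul, ← ENNReal.ofReal_sum_of_nonneg fun i _ => hnonneg i j, hcol j,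
    ENNReal.ofReal_one, one_smul]

theorem stmt2_general (n : ℕ)
    (F : Fin n → Measure ℝ)
    (Λ : Matrix (Fin n) (Fin n) ℝ) (hΛ : DoublyStochastic Λ) :
    aggSet n (distMix Λ F) ⊆ aggSet n (fun _ => (n : ℝ≥0∞)⁻¹ • ∑ j, F j) := by
  rw [← sum_distMix hΛ.1 hΛ.2.2 F]
  exact aggSetF_subset_aggSetF_average (by fun_prop) (isSymmetricFn_sum n) _

/-- Corollary 2.1: Dₙ(Λ𝐅) ⊆ Dₙ(F̄,…,F̄) with F̄ the equal-weight mixture. -/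
theorem stmt2 (n : ℕ) (hn : 0 < n)
    (F : Fin n → Measure ℝ) (hF : ∀ i, IsProbabilityMeasure (F i))
    (Λ : Matrix (Fin n) (Fin n) ℝ) (hΛ : DoublyStochastic Λ) :
    aggSet n (distMix Λ F) ⊆ aggSet n (fun _ => (n : ℝ≥0∞)⁻¹ • ∑ j, F j) :=
  stmt2_general n F Λ hΛ

end
end

section
/- Let 𝐅 = (F₁,…,Fₙ) be an n-tuple of Borel probability measures on ℝ, each with finite first moment, and let Λ be an n×n doubly stochastic matrix. Then C(𝐅) = C(Λ⊗𝐅), where Λ⊗𝐅 is the Λ-quantile mixture of 𝐅. -/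
open MeasureTheory
open scoped ENNReal BigOperators

noncomputable section

/-!
The quantile function of the law of `g(U)`, for `g` nondecreasing and left-continuous on `(0,1)`,
is `g` itself on `(0,1)`. The quantile functions `Fⱼ⁻¹` are nondecreasing and left-continuous,
hence so is every nonnegative combination `∑ⱼ Λᵢⱼ Fⱼ⁻¹`; so the `i`-th component of `Λ⊗𝐅` has
quantile function `∑ⱼ Λᵢⱼ Fⱼ⁻¹` on `(0,1)`. Summing over `i` and using that the columns of `Λ`
sum to one, `∑ᵢ (Λ⊗𝐅)ᵢ⁻¹ = ∑ⱼ Fⱼ⁻¹` on `(0,1)`: the comonotonic sums of `𝐅` and `Λ⊗𝐅` coincide.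
-/

open ProbabilityTheory Set Filter Topology

section Quantile

variable (F : Measure ℝ)

lemma nonempty_setOf_le_cdf {p : ℝ} (hp : p < 1) : {x | p ≤ cdf F x}.Nonempty :=
  let ⟨x, hx⟩ := ((tendsto_cdf_atTop (μ := F)).eventually (eventually_gt_nhds hp)).exists
  ⟨x, hx.le⟩

lemma bddBelow_setOf_le_cdf {p : ℝ} (hp : 0 < p) : BddBelow {x | p ≤ cdf F x} := by
  obtain ⟨y, hy⟩ := ((tendsto_cdf_atBot (μ := F)).eventually (eventually_lt_nhds hp)).exists
  refine ⟨y, fun x hx => ?_⟩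
  by_contra! hxy
  exact hy.not_ge (hx.trans (monotone_cdf F hxy.le))

variable [IsProbabilityMeasure F]

lemma quantile_eq_sInf_cdf (p : ℝ) : quantile F p = sInf {x | p ≤ cdf F x} := by
  simp only [quantile, cdf_eq_real, measureReal_def]

lemma le_cdf_quantile {p : ℝ} (hp : p ∈ Ioo 0 1) : p ≤ cdf F (quantile F p) := by
  rw [quantile_eq_sInf_cdf]
  have h_right : ∀ x, sInf {x | p ≤ cdf F x} < x → p ≤ cdf F x := fun x hx =>
    let ⟨y, hy, hyx⟩ := exists_lt_of_csInf_lt (nonempty_setOf_le_cdf F hp.2) hx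
    hy.trans (monotone_cdf F hyx.le)
  exact ge_of_tendsto
    (((cdf F).right_continuous _).mono_left (nhdsWithin_mono _ Ioi_subset_Ici_self))
    (eventually_nhdsWithin_of_forall h_right)

lemma quantile_le_iff_le_cdf {p x : ℝ} (hp : p ∈ Ioo 0 1) : quantile F p ≤ x ↔ p ≤ cdf F x :=
  ⟨fun h => (le_cdf_quantile F hp).trans (monotone_cdf F h),
    fun h => (quantile_eq_sInf_cdf F p).trans_le (csInf_le (bddBelow_setOf_le_cdf F hp.1) h)⟩

lemma quantile_monotoneOn : MonotoneOn (quantile F) (Ioo 0 1) := fun _ hp _ hq hpq =>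
  (quantile_le_iff_le_cdf F hp).2 (hpq.trans (le_cdf_quantile F hq))

lemma continuousWithinAt_quantile_Iic {p : ℝ} (hp : p ∈ Ioo 0 1) :
    ContinuousWithinAt (quantile F) (Iic p) p := by
  refine tendsto_order.2 ⟨fun a ha => ?_, fun b hb => ?_⟩
  · have hcdf : cdf F a < p := not_le.1 fun h => ha.not_ge ((quantile_le_iff_le_cdf F hp).2 h)
    filter_upwards [self_mem_nhdsWithin, nhdsWithin_le_nhds (Ioi_mem_nhds hcdf)] with q hqp hq
    have hq01 : q ∈ Ioo 0 1 := ⟨(cdf_nonneg F a).trans_lt hq, hqp.trans_lt hp.2⟩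
    exact not_le.1 fun h => (not_le.2 hq) ((quantile_le_iff_le_cdf F hq01).1 h)
  · filter_upwards [self_mem_nhdsWithin, nhdsWithin_le_nhds (Ioi_mem_nhds hp.1)] with q hqp hq
    exact (quantile_monotoneOn F ⟨hq, hqp.trans_lt hp.2⟩ hp hqp).trans_lt hb

end Quantile

lemma measure_map_uniform01_Iic {g : ℝ → ℝ} (hg : MonotoneOn g (Ioo 0 1)) (x : ℝ) :
    uniform01.map g (Iic x) = volume ({t | g t ≤ x} ∩ Ioo 0 1) := by
  rw [uniform01, Measure.map_apply_of_aemeasurable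
    (aemeasurable_restrict_of_monotoneOn measurableSet_Ioo hg) measurableSet_Iic,
    Measure.restrict_apply' measurableSet_Ioo]
  rfl

lemma quantile_map_uniform01 {g : ℝ → ℝ} (hmono : MonotoneOn g (Ioo 0 1))
    (hcont : ∀ u ∈ Ioo (0 : ℝ) 1, ContinuousWithinAt g (Iic u) u) {u : ℝ} (hu : u ∈ Ioo 0 1) :
    quantile (uniform01.map g) u = g u := by
  suffices h : ∀ x, u ≤ (uniform01.map g (Iic x)).toReal ↔ g u ≤ x by
    simp only [quantile, h]
    exact csInf_Ici
  intro x
  have h_ne_top : volume ({t | g t ≤ x} ∩ Ioo 0 1) ≠ ⊤ :=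
    ne_top_of_le_ne_top (by simp) (measure_mono inter_subset_right)
  rw [measure_map_uniform01_Iic hmono, ← ENNReal.ofReal_le_iff_le_toReal h_ne_top]
  constructor
  · intro hvol
    by_contra! hx
    obtain ⟨l, hlu, hl⟩ := mem_nhdsLE_iff_exists_Ioc_subset.1 ((hcont u hu).eventually_const_lt hx)
    have h_sub : {t | g t ≤ x} ∩ Ioo 0 1 ⊆ Ioc 0 l := fun t ⟨htx, ht⟩ =>
      ⟨ht.1, not_lt.1 fun hlt => htx.not_gt <| (le_or_gt t u).elim (fun htu => hl ⟨hlt, htu⟩)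
        fun hut => hx.trans_le (hmono hu ht hut.le)⟩
    have := hvol.trans (measure_mono h_sub)
    rw [Real.volume_Ioc, sub_zero, ENNReal.ofReal_le_ofReal_iff'] at this
    rcases this with h | h
    · exact hlu.not_ge h
    · exact hu.1.not_ge h
  · intro hx
    calc ENNReal.ofReal u = volume (Ioc 0 u) := by rw [Real.volume_Ioc, sub_zero]
      _ ≤ volume ({t | g t ≤ x} ∩ Ioo 0 1) := measure_mono fun t ht =>
        have ht01 : t ∈ Ioo 0 1 := ⟨ht.1, ht.2.trans_lt hu.2⟩
        ⟨(hmono ht01 hu ht.2).trans hx, ht01⟩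

lemma quantile_quantileMix {n : ℕ} {F : Fin n → Measure ℝ} (hF : ∀ i, IsProbabilityMeasure (F i))
    {Λ : Matrix (Fin n) (Fin n) ℝ} (hΛ : ∀ i j, 0 ≤ Λ i j) (i : Fin n) {u : ℝ} (hu : u ∈ Ioo 0 1) :
    quantile (quantileMix Λ F i) u = ∑ j, Λ i j * quantile (F j) u := by
  refine quantile_map_uniform01 (MonotoneOn.finsetSum fun j _ => ?_)
    (fun p hp => tendsto_finsetSum _ fun j _ =>
      (continuousWithinAt_quantile_Iic (F j) hp).const_mul _) hu
  exact fun a ha b hb hab =>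
    mul_le_mul_of_nonneg_left (quantile_monotoneOn (F j) ha hb hab) (hΛ i j)

lemma comonoSum_quantileMix {n : ℕ} {F : Fin n → Measure ℝ}
    (hF : ∀ i, IsProbabilityMeasure (F i)) {Λ : Matrix (Fin n) (Fin n) ℝ}
    (hΛ : DoublyStochastic Λ) : comonoSum n (quantileMix Λ F) = comonoSum n F := by
  refine Measure.map_congr ((ae_restrict_iff' measurableSet_Ioo).2 (.of_forall fun u hu => ?_))
  simp only [quantile_quantileMix hF hΛ.1 _ hu]
  rw [Finset.sum_comm]
  exact Finset.sum_congr rfl fun j _ => by rw [← Finset.sum_mul, hΛ.2.2 j, one_mul]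

theorem stmt4_general (n : ℕ)
    (F : Fin n → Measure ℝ) (hF : ∀ i, IsProbabilityMeasure (F i))
    (Λ : Matrix (Fin n) (Fin n) ℝ) (hΛ : DoublyStochastic Λ) :
    CSet n F = CSet n (quantileMix Λ F) := by
  simp only [CSet, comonoSum_quantileMix hF hΛ]

/-- Proposition 3.1: C(𝐅) = C(Λ⊗𝐅). -/
theorem stmt4 (n : ℕ)
    (F : Fin n → Measure ℝ) (hF : ∀ i, IsProbabilityMeasure (F i))
    (hFint : ∀ i, Integrable id (F i))
    (Λ : Matrix (Fin n) (Fin n) ℝ) (hΛ : DoublyStochastic Λ) :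
    CSet n F = CSet n (quantileMix Λ F) :=
  stmt4_general n F hF Λ hΛ

end
end

section
/- Let Λ be an n×n doubly stochastic matrix and 𝐅 = (F₁,…,Fₙ) an n-tuple of Borel probability measures on ℝ with finite first moments. Then (Λ𝐅)ᵢ ≺_cx Fᵢ for every i if and only if Λ𝐅 = 𝐅 (componentwise equality of measures). -/
open MeasureTheory
open scoped ENNReal BigOperators

noncomputable section

/-! The stop-loss functions `x ↦ (x - t)⁺` are convex, and for a distribution with finite mean
their expectations determine the distribution: integrated over `(t, ∞)`, the tail function
`u ↦ μ (u, ∞)` gives the stop-loss premium at `t`. Fix `t` and let `b` be the vector of stop-loss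
premiums of the `Fⱼ`; the premiums of the mixtures are `Λ b`, so the convex-order hypothesis gives
`Λ b ≤ b`. As the columns of `Λ` sum to one, `Λ b` and `b` have the same total, hence `Λ b = b`,
and each `(Λ𝐅)ᵢ` has the stop-loss transform of `Fᵢ`. -/

open Set
open scoped Matrix

theorem ConvexOrder.refl (F : Measure ℝ) : ConvexOrder F F :=
  fun _ _ _ _ => le_rfl

theorem Matrix.mulVec_eq_self_of_mulVec_le {ι : Type*} [Fintype ι] {Λ : Matrix ι ι ℝ}
    (hcol : ∀ j, ∑ i, Λ i j = 1) {b : ι → ℝ} (h : Λ *ᵥ b ≤ b) : Λ *ᵥ b = b := by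
  have hsum : ∑ i, (Λ *ᵥ b) i = ∑ i, b i := by
    simp only [Matrix.mulVec, dotProduct]
    rw [Finset.sum_comm]
    simp [← Finset.sum_mul, hcol]
  funext i
  exact (Finset.sum_eq_sum_iff_of_le fun k _ => h k).mp hsum i (Finset.mem_univ i)

section StopLoss

variable {μ ν : Measure ℝ}

theorem convexOn_stopLoss (t : ℝ) : ConvexOn ℝ univ fun x : ℝ => max (x - t) 0 :=
  ((convexOn_id convex_univ).sub (concaveOn_const t convex_univ)).sup
    (convexOn_const 0 convex_univ)

theorem integrable_stopLoss [IsFiniteMeasure μ] (hμ : Integrable id μ) (t : ℝ) :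
    Integrable (fun x : ℝ => max (x - t) 0) μ :=
  (hμ.sub (integrable_const t)).pos_part

theorem ofReal_integral_stopLoss (t : ℝ) (h : Integrable (fun x : ℝ => max (x - t) 0) μ) :
    ENNReal.ofReal (∫ x, max (x - t) 0 ∂μ) = ∫⁻ u in Ioi t, μ (Ioi u) := by
  have hnn : 0 ≤ᵐ[μ] fun x : ℝ => max (x - t) 0 := ae_of_all _ fun x => le_max_right _ _
  have hlevel : ∀ s ∈ Ioi (0 : ℝ), μ {x | s < max (x - t) 0} = μ (Ioi (t + s)) := by
    intro s hs
    congr 1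
    ext x
    simp only [mem_ofPred_eq, mem_Ioi, lt_max_iff, not_lt_of_gt (mem_Ioi.mp hs), or_false]
    constructor <;> intro <;> linarith
  have hshift : (fun s : ℝ => t + s) ⁻¹' Ioi t = Ioi 0 := by
    ext s
    simp
  rw [ofReal_integral_eq_lintegral_ofReal h hnn,
    lintegral_eq_lintegral_meas_lt μ hnn h.aemeasurable,
    setLIntegral_congr_fun measurableSet_Ioi hlevel, ← hshift]
  exact (measurePreserving_add_left volume t).setLIntegral_comp_preimage_emb
    (measurableEmbedding_addLeft t) (fun u => μ (Ioi u)) (Ioi t)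

theorem setLIntegral_measure_Ioi_ne_top [IsFiniteMeasure μ] (hμ : Integrable id μ) (t : ℝ) :
    ∫⁻ u in Ioi t, μ (Ioi u) ≠ ∞ := by
  rw [← ofReal_integral_stopLoss t (integrable_stopLoss hμ t)]
  exact ENNReal.ofReal_ne_top

theorem ofReal_mul_measure_Ioi_le_setLIntegral (t ε : ℝ) :
    ENNReal.ofReal ε * μ (Ioi (t + ε)) ≤ ∫⁻ u in Ioc t (t + ε), μ (Ioi u) := by
  calc ENNReal.ofReal ε * μ (Ioi (t + ε))
      = ∫⁻ _ in Ioc t (t + ε), μ (Ioi (t + ε)) := by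
        rw [setLIntegral_const, Real.volume_Ioc, add_sub_cancel_left, mul_comm]
    _ ≤ ∫⁻ u in Ioc t (t + ε), μ (Ioi u) :=
        setLIntegral_mono' measurableSet_Ioc fun u hu => measure_mono (Ioi_subset_Ioi hu.2)

theorem setLIntegral_le_ofReal_mul_measure_Ioi (t ε : ℝ) :
    ∫⁻ u in Ioc t (t + ε), μ (Ioi u) ≤ ENNReal.ofReal ε * μ (Ioi t) := by
  calc ∫⁻ u in Ioc t (t + ε), μ (Ioi u)
      ≤ ∫⁻ _ in Ioc t (t + ε), μ (Ioi t) :=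
        setLIntegral_mono' measurableSet_Ioc fun u hu => measure_mono (Ioi_subset_Ioi hu.1.le)
    _ = ENNReal.ofReal ε * μ (Ioi t) := by
        rw [setLIntegral_const, Real.volume_Ioc, add_sub_cancel_left, mul_comm]

theorem measure_Ioi_le_of_forall_pos {t : ℝ} {c : ℝ≥0∞}
    (h : ∀ ε > 0, μ (Ioi (t + ε)) ≤ c) : μ (Ioi t) ≤ c := by
  have hunion : ⋃ ε : Ioi (0 : ℝ), Ioi (t + ε) = Ioi t := by
    ext x
    simp only [mem_iUnion, mem_Ioi, Subtype.exists, exists_prop]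
    exact ⟨fun ⟨ε, hε, hx⟩ => by linarith, fun hx => ⟨(x - t) / 2, by linarith, by linarith⟩⟩
  have hanti : Antitone fun ε : Ioi (0 : ℝ) => Ioi (t + ε) :=
    fun a b hab => Ioi_subset_Ioi (by simpa using hab)
  rw [← hunion, hanti.measure_iUnion]
  exact iSup_le fun ε => h ε ε.2

theorem setLIntegral_Ioc_eq_of_setLIntegral_Ioi_eq {f g : ℝ → ℝ≥0∞}
    (h : ∀ t, ∫⁻ u in Ioi t, f u = ∫⁻ u in Ioi t, g u) {a b : ℝ} (hab : a ≤ b)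
    (hb : ∫⁻ u in Ioi b, g u ≠ ∞) :
    ∫⁻ u in Ioc a b, f u = ∫⁻ u in Ioc a b, g u := by
  have hsplit : ∀ φ : ℝ → ℝ≥0∞,
      ∫⁻ u in Ioi a, φ u = (∫⁻ u in Ioc a b, φ u) + ∫⁻ u in Ioi b, φ u := fun φ => by
    rw [← lintegral_union measurableSet_Ioi Ioc_disjoint_Ioi_same, Ioc_union_Ioi_eq_Ioi hab]
  have := h a
  rw [hsplit f, hsplit g, h b] at this
  exact (ENNReal.add_left_inj hb).mp this

theorem measure_Ioi_le_of_setLIntegral_measure_Ioi_eq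
    (h : ∀ t, ∫⁻ u in Ioi t, μ (Ioi u) = ∫⁻ u in Ioi t, ν (Ioi u))
    (hfin : ∀ t, ∫⁻ u in Ioi t, ν (Ioi u) ≠ ∞) (t : ℝ) : μ (Ioi t) ≤ ν (Ioi t) := by
  refine measure_Ioi_le_of_forall_pos fun ε hε => ?_
  have hmul : ENNReal.ofReal ε * μ (Ioi (t + ε)) ≤ ENNReal.ofReal ε * ν (Ioi t) :=
    calc ENNReal.ofReal ε * μ (Ioi (t + ε))
        ≤ ∫⁻ u in Ioc t (t + ε), μ (Ioi u) := ofReal_mul_measure_Ioi_le_setLIntegral t ε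
      _ = ∫⁻ u in Ioc t (t + ε), ν (Ioi u) :=
        setLIntegral_Ioc_eq_of_setLIntegral_Ioi_eq h (by linarith) (hfin _)
      _ ≤ ENNReal.ofReal ε * ν (Ioi t) := setLIntegral_le_ofReal_mul_measure_Ioi t ε
  exact (ENNReal.mul_le_mul_iff_right (by simpa using hε) ENNReal.ofReal_ne_top).mp hmul

theorem eq_of_integral_stopLoss_eq [IsProbabilityMeasure μ] [IsProbabilityMeasure ν]
    (hμ : Integrable id μ) (hν : Integrable id ν)
    (h : ∀ t, ∫ x, max (x - t) 0 ∂μ = ∫ x, max (x - t) 0 ∂ν) : μ = ν := by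
  have htail : ∀ t, ∫⁻ u in Ioi t, μ (Ioi u) = ∫⁻ u in Ioi t, ν (Ioi u) := fun t => by
    rw [← ofReal_integral_stopLoss t (integrable_stopLoss hμ t),
      ← ofReal_integral_stopLoss t (integrable_stopLoss hν t), h t]
  have hIoi : ∀ t, μ (Ioi t) = ν (Ioi t) := fun t =>
    le_antisymm
      (measure_Ioi_le_of_setLIntegral_measure_Ioi_eq htail (setLIntegral_measure_Ioi_ne_top hν) t)
      (measure_Ioi_le_of_setLIntegral_measure_Ioi_eq (fun s => (htail s).symm)
        (setLIntegral_measure_Ioi_ne_top hμ) t)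
  refine Measure.ext_of_Iic μ ν fun t => ?_
  rw [← compl_Ioi, prob_compl_eq_one_sub measurableSet_Ioi,
    prob_compl_eq_one_sub measurableSet_Ioi, hIoi]

end StopLoss

section DistMix

variable {n : ℕ} {Λ : Matrix (Fin n) (Fin n) ℝ} {F : Fin n → Measure ℝ}

theorem isProbabilityMeasure_distMix (hnn : ∀ i j, 0 ≤ Λ i j) (hrow : ∀ i, ∑ j, Λ i j = 1)
    (hF : ∀ i, IsProbabilityMeasure (F i)) (i : Fin n) :
    IsProbabilityMeasure (distMix Λ F i) := by
  constructor
  simp only [distMix, Measure.finsetSum_apply, Measure.smul_apply, smul_eq_mul, measure_univ,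
    mul_one]
  rw [← ENNReal.ofReal_sum_of_nonneg fun j _ => hnn i j, hrow i, ENNReal.ofReal_one]

theorem integrable_distMix {g : ℝ → ℝ} (hg : ∀ j, Integrable g (F j)) (i : Fin n) :
    Integrable g (distMix Λ F i) :=
  integrable_finsetSum_measure.mpr fun j _ => (hg j).smul_measure ENNReal.ofReal_ne_top

theorem integral_distMix (hnn : ∀ i j, 0 ≤ Λ i j) {g : ℝ → ℝ} (hg : ∀ j, Integrable g (F j))
    (i : Fin n) : ∫ x, g x ∂distMix Λ F i = (Λ *ᵥ fun j => ∫ x, g x ∂F j) i := by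
  rw [distMix, integral_finsetSum_measure fun j _ => (hg j).smul_measure ENNReal.ofReal_ne_top]
  refine Finset.sum_congr rfl fun j _ => ?_
  rw [integral_smul_measure, ENNReal.toReal_ofReal (hnn i j), smul_eq_mul]

end DistMix

/-- Proposition 4.2(iv): (Λ𝐅)ᵢ ≺cx Fᵢ for all i iff Λ𝐅 = 𝐅. -/
theorem stmt10 (n : ℕ) (Λ : Matrix (Fin n) (Fin n) ℝ) (hΛ : DoublyStochastic Λ)
    (F : Fin n → Measure ℝ) (hF : ∀ i, IsProbabilityMeasure (F i))
    (hFint : ∀ i, Integrable id (F i)) :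
    (∀ i, ConvexOrder (distMix Λ F i) (F i)) ↔ (∀ i, distMix Λ F i = F i) := by
  obtain ⟨hnn, hrow, hcol⟩ := hΛ
  refine ⟨fun hcx i => ?_, fun h i => h i ▸ ConvexOrder.refl (F i)⟩
  have := isProbabilityMeasure_distMix hnn hrow hF i
  refine eq_of_integral_stopLoss_eq (integrable_distMix hFint i) (hFint i) fun t => ?_
  have hint : ∀ j, Integrable (fun x : ℝ => max (x - t) 0) (F j) :=
    fun j => integrable_stopLoss (hFint j) t
  set b : Fin n → ℝ := fun j => ∫ x, max (x - t) 0 ∂F j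
  have hle : Λ *ᵥ b ≤ b := fun k => by
    rw [← integral_distMix hnn hint k]
    exact hcx k _ (convexOn_stopLoss t) (integrable_distMix hint k) (hint k)
  rw [integral_distMix hnn hint i, Matrix.mulVec_eq_self_of_mulVec_le hcol hle]

end
end
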